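/- arXiv:1912.01829 — 5 statements merged into one kernel-verified Lean document; each statement's English description precedes it below -/
import Mathlib

section
/- For any positive integers m and n with gcd(m,n)=1, the rational q-Catalan function C_{m,n}(q) = (1/[m+n]_q)·qbinom(m+n,n) is a polynomial in q with nonnegative integer coefficients. -/
open Polynomial

noncomputable def q : RatFunc ℚ := RatFunc.X

noncomputable def qint (t : RatFunc ℚ) (k : ℕ) : RatFunc ℚ := (1 - t ^ k) / (1 - t)

noncomputable def qfact (t : RatFunc ℚ) : ℕ → RatFunc ℚ
  | 0 => 1
  | k + 1 => qint t (k + 1) * qfact t k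

noncomputable def qbinom (t : RatFunc ℚ) (a b : ℕ) : RatFunc ℚ :=
  qfact t a / (qfact t b * qfact t (a - b))

noncomputable def qCat (t : RatFunc ℚ) (m n : ℕ) : RatFunc ℚ :=
  (qint t (m + n))⁻¹ * qbinom t (m + n) n

/-!
With `N = m + n`, the Gaussian polynomial `[N choose n]` is, up to the factor `X ^ (n choose 2)`,
the generating function of the `n`-subsets of `{0, …, N-1}` by their sum. Its coefficients are
unimodal by Proctor's `sl₂` argument: moving one element of a subset up or down by one gives
operators `raise` and `lower` whose commutator `weight` acts on a subset `S` by
`2 ∑ S - |S| (N - 1)`, so `raise` is injective below the middle degree and `lower` above it.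
Rotating `{0, …, N-1}` cyclically adds `n` to the sum modulo `N`; as `gcd(n, N) = 1`, modulo
`X ^ N - 1` the generating function is therefore fixed by multiplication by `X`, i.e.
`1 + X + ⋯ + X^(N-1)` divides it over `ℤ`. Finally, if `1 + X + ⋯ + X^(N-1)` divides a unimodal
polynomial with coefficients `a`, each coefficient of the quotient is a sum of differences
`a k - a (k - 1)` taken on the increasing side of the mode, or of `a (k - 1) - a k` taken on the
decreasing side, hence a natural number.
-/

open Finset
open Finsupp (single linearCombination linearCombination_single lhom_ext supported
  single_mem_supported)

/-! ### Dividing unimodal polynomials by `1 + X + ⋯ + X^(N-1)` -/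

def IsUnimodal (a : ℕ → ℕ) : Prop :=
  ∃ p, (∀ s < p, a s ≤ a (s + 1)) ∧ ∀ s, p ≤ s → a (s + 1) ≤ a s

lemma IsUnimodal.comp_add {a : ℕ → ℕ} (ha : IsUnimodal a) (t : ℕ) :
    IsUnimodal fun s => a (s + t) := by
  obtain ⟨p, hinc, hdec⟩ := ha
  refine ⟨p - t, fun s hs => ?_, fun s hs => ?_⟩
  · simpa only [Nat.add_right_comm] using hinc (s + t) (by omega)
  · simpa only [Nat.add_right_comm] using hdec (s + t) (by omega)

lemma coeff_eq_of_mul_geom_sum_eq {f P : ℤ[X]} {N : ℕ} (h : P * ∑ i ∈ range N, X ^ i = f)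
    (k : ℕ) : P.coeff k = (if N ≤ k then P.coeff (k - N) else 0) + f.coeff k
      - (if 1 ≤ k then f.coeff (k - 1) else 0) := by
  have h' : P * X ^ N - P = f * X ^ 1 - f := by
    rw [← h]
    linear_combination (-P) * geom_sum_mul (X : ℤ[X]) N
  have := congrArg (coeff · k) h'
  simp only [coeff_sub, coeff_mul_X_pow'] at this
  linarith

lemma coeff_nonneg_of_mul_geom_sum_eq {f : ℕ[X]} {P : ℤ[X]} {N : ℕ} (hN : 0 < N)
    (hf : IsUnimodal f.coeff) (h : P * ∑ i ∈ range N, X ^ i = f.map (Nat.castRingHom ℤ))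
    (k : ℕ) : 0 ≤ P.coeff k := by
  obtain ⟨p, hinc, hdec⟩ := hf
  have hrec := coeff_eq_of_mul_geom_sum_eq h
  simp only [coeff_map, eq_natCast] at hrec
  -- Left of the mode, unfold the recursion downwards; right of it, upwards until `P` vanishes.
  have up_to_mode : ∀ k ≤ p, 0 ≤ P.coeff k := by
    intro k
    induction k using Nat.strong_induction_on with
    | _ k ih =>
      intro hk
      have h1 : 0 ≤ if N ≤ k then P.coeff (k - N) else 0 := by
        split_ifs <;> [exact ih _ (by omega) (by omega); exact le_rfl]
      have h2 : (if 1 ≤ k then (f.coeff (k - 1) : ℤ) else 0) ≤ f.coeff k := by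
        split_ifs with hk1
        · exact_mod_cast Nat.sub_add_cancel hk1 ▸ hinc (k - 1) (by omega)
        · positivity
      linarith [hrec k]
  have past_mode : ∀ j k, P.natDegree < k + j → p < k → 0 ≤ P.coeff k := by
    intro j
    induction j with
    | zero => intro k hk _; rw [coeff_eq_zero_of_natDegree_lt (by omega)]
    | succ j ih =>
      intro k hk hpk
      have hkN := hrec (k + N)
      rw [if_pos (by omega), if_pos (by omega), Nat.add_sub_cancel] at hkN
      have h1 := ih (k + N) (by omega) (by omega)
      have h2 : f.coeff (k + N) ≤ f.coeff (k + N - 1) := by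
        simpa [Nat.sub_add_cancel (by omega : 1 ≤ k + N)] using hdec (k + N - 1) (by omega)
      have h2' : (f.coeff (k + N) : ℤ) ≤ f.coeff (k + N - 1) := by exact_mod_cast h2
      linarith
  exact (le_or_gt k p).elim (up_to_mode k) (past_mode (P.natDegree + 1) k (by omega))

theorem geom_sum_dvd_of_isUnimodal {f : ℕ[X]} {N : ℕ} (hN : 0 < N) (hf : IsUnimodal f.coeff)
    (hdvd : (∑ i ∈ range N, X ^ i : ℤ[X]) ∣ f.map (Nat.castRingHom ℤ)) :
    (∑ i ∈ range N, X ^ i : ℕ[X]) ∣ f := by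
  obtain ⟨P, hP⟩ := hdvd
  have nonneg := coeff_nonneg_of_mul_geom_sum_eq hN hf (by rw [hP, mul_comm])
  obtain ⟨Q, rfl⟩ : P ∈ lifts (Nat.castRingHom ℤ) :=
    (lifts_iff_coeff_lifts P).mpr fun k => ⟨(P.coeff k).toNat, by simp [nonneg k]⟩
  refine ⟨Q, map_injective (Nat.castRingHom ℤ) Nat.cast_injective ?_⟩
  simpa [Polynomial.map_mul, Polynomial.map_sum] using hP

/-! ### Subsets of `{0, …, N-1}` graded by their sum -/

def subsetsWithSum (N n s : ℕ) : Finset (Finset ℕ) :=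
  ((range N).powersetCard n).filter fun S => ∑ i ∈ S, i = s

noncomputable def subsetSumPoly (N n : ℕ) : ℕ[X] :=
  ∑ S ∈ (range N).powersetCard n, X ^ ∑ i ∈ S, i

lemma mem_subsetsWithSum {N n s : ℕ} {S : Finset ℕ} :
    S ∈ subsetsWithSum N n s ↔ S ⊆ range N ∧ #S = n ∧ ∑ i ∈ S, i = s := by
  rw [subsetsWithSum, mem_filter, mem_powersetCard, and_assoc]

lemma coeff_subsetSumPoly (N n s : ℕ) :
    (subsetSumPoly N n).coeff s = #(subsetsWithSum N n s) := by
  simp [subsetSumPoly, coeff_X_pow, subsetsWithSum, sum_boole, eq_comm]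

lemma subsetSumPoly_zero_right (N : ℕ) : subsetSumPoly N 0 = 1 := by
  simp [subsetSumPoly]

lemma subsetSumPoly_succ_succ (N n : ℕ) :
    subsetSumPoly (N + 1) (n + 1) = subsetSumPoly N (n + 1) + X ^ N * subsetSumPoly N n := by
  have hN : N ∉ range N := by simp
  rw [subsetSumPoly, range_add_one, powersetCard_succ_insert hN, sum_union, sum_image]
  · simp only [subsetSumPoly, mul_sum, ← pow_add]
    congr 1
    refine sum_congr rfl fun S hS => ?_
    rw [sum_insert fun h => hN ((mem_powersetCard.mp hS).1 h), add_comm]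
  · intro S hS T hT hST
    have hNS : N ∉ S := fun h => hN ((mem_powersetCard.mp hS).1 h)
    have hNT : N ∉ T := fun h => hN ((mem_powersetCard.mp hT).1 h)
    simpa [erase_insert hNS, erase_insert hNT] using congrArg (erase · N) hST
  · refine disjoint_left.mpr fun S hS hS' => ?_
    obtain ⟨T, -, rfl⟩ := mem_image.mp hS'
    exact hN ((mem_powersetCard.mp hS).1 (mem_insert_self N T))

lemma sum_insert_erase_add {M : Type*} [AddCommMonoid M] (g : ℕ → M) {a b : ℕ} {S : Finset ℕ}
    (ha : a ∈ S) (hb : b ∉ S) : ∑ x ∈ insert b (S.erase a), g x + g a = ∑ x ∈ S, g x + g b := by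
  rw [sum_insert (fun h => hb (mem_of_mem_erase h)), add_assoc, sum_erase_add _ _ ha, add_comm]

lemma card_insert_erase {a b : ℕ} {S : Finset ℕ} (ha : a ∈ S) (hb : b ∉ S) :
    #(insert b (S.erase a)) = #S := by
  rw [card_insert_of_notMem (fun h => hb (mem_of_mem_erase h)), card_erase_add_one ha]

lemma insert_erase_mem_subsetsWithSum {N n a b s t : ℕ} {S : Finset ℕ}
    (hS : S ∈ subsetsWithSum N n s) (hb : b < N) (ha : a ∈ S) (hbS : b ∉ S) (hst : s + b = t + a) :
    insert b (S.erase a) ∈ subsetsWithSum N n t := by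
  obtain ⟨hsub, hcard, hsum⟩ := mem_subsetsWithSum.mp hS
  have := sum_insert_erase_add id ha hbS
  simp only [id] at this
  refine mem_subsetsWithSum.mpr ⟨fun x hx => ?_, card_insert_erase ha hbS ▸ hcard, by omega⟩
  rcases mem_insert.mp hx with rfl | hx
  · exact mem_range.mpr hb
  · exact hsub (mem_of_mem_erase hx)

lemma sum_sub_add_sum_of_mem_subsetsWithSum {N n s : ℕ} {S : Finset ℕ}
    (hS : S ∈ subsetsWithSum N n s) : ∑ i ∈ S, (N - 1 - i) + s = n * (N - 1) := by
  obtain ⟨hsub, hcard, hsum⟩ := mem_subsetsWithSum.mp hS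
  rw [← hsum, ← sum_add_distrib, sum_congr rfl fun i hi => Nat.sub_add_cancel
    (Nat.le_sub_one_of_lt (mem_range.mp (hsub hi))), sum_const, hcard, smul_eq_mul]

/-! ### Unimodality through the `sl₂`-action on subsets -/

theorem IsSl2Triple.eq_zero_of_lie_e_eq_zero {L M : Type*} [LieRing L] [LieAlgebra ℚ L]
    [AddCommGroup M] [Module ℚ M] [LieRingModule L M] [LieModule ℚ L M] {h e f : L}
    (t : IsSl2Triple h e f) {m : M} {μ : ℚ} (hμ : μ < 0) (hh : ⁅h, m⁆ = μ • m) (he : ⁅e, m⁆ = 0)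
    {k : ℕ} (hk : (LieModule.toEnd ℚ L M f ^ k) m = 0) : m = 0 := by
  by_contra hm
  have P : t.HasPrimitiveVectorWith m μ := ⟨hm, hh, he⟩
  obtain ⟨j, hj₁, hj₂⟩ := Nat.exists_not_and_succ_of_not_zero_of_exists
    (p := fun j => (LieModule.toEnd ℚ L M f ^ j) m = 0) hm ⟨k, hk⟩
  have := P.lie_e_pow_succ_toEnd_f j
  rw [hj₂, lie_zero, eq_comm, smul_eq_zero_iff_left hj₁, mul_eq_zero, sub_eq_zero] at this
  exact this.elim (Nat.cast_add_one_ne_zero j) fun hμj => hμ.not_ge (hμj ▸ Nat.cast_nonneg j)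

namespace Sl2Subsets

local notation "𝕍" => Finset ℕ →₀ ℚ

/- The commutator bracket on `Module.End ℚ 𝕍` is only a local instance; the Lie-module lemmas
`sum_lie`, `smul_lie`, … do not match it syntactically, hence the primed copies below. -/
attribute [local instance] LieRing.ofAssociativeRing

noncomputable def move (a b : ℕ) : Module.End ℚ 𝕍 :=
  linearCombination ℚ fun S => if a ∈ S ∧ b ∉ S then single (insert b (S.erase a)) 1 else 0

noncomputable def occ (k : ℕ) : Module.End ℚ 𝕍 :=
  linearCombination ℚ fun S => if k ∈ S then single S 1 else 0

lemma move_single (a b : ℕ) (S : Finset ℕ) (c : ℚ) :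
    move a b (single S c) = if a ∈ S ∧ b ∉ S then single (insert b (S.erase a)) c else 0 := by
  simp only [move, linearCombination_single]
  split_ifs <;> simp

lemma occ_single (k : ℕ) (S : Finset ℕ) (c : ℚ) :
    occ k (single S c) = if k ∈ S then single S c else 0 := by
  simp only [occ, linearCombination_single]
  split_ifs <;> simp

lemma move_mul_move_comm {a b c d : ℕ} (hac : a ≠ c) (had : a ≠ d) (hbc : b ≠ c) (hbd : b ≠ d) :
    move a b * move c d = move c d * move a b := by
  refine lhom_ext fun S x => ?_
  by_cases ha : a ∈ S <;> by_cases hb : b ∈ S <;> by_cases hc : c ∈ S <;> by_cases hd : d ∈ S <;>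
    simp [move_single, *, hac.symm, had.symm, hbc.symm, hbd.symm]
  congr 1
  ext y
  simp only [mem_insert, mem_erase]
  grind

lemma move_mul_move_same_target (a b c : ℕ) : move a b * move c b = 0 := by
  refine lhom_ext fun S x => ?_
  by_cases hb : b ∈ S <;> by_cases hc : c ∈ S <;> simp [move_single, *]

lemma move_mul_move_same_source (a b d : ℕ) : move a b * move a d = 0 := by
  refine lhom_ext fun S x => ?_
  by_cases ha : a ∈ S <;> by_cases hd : d ∈ S <;> by_cases had : a = d <;> simp [move_single, *]

lemma lie_move_move_swap {a b : ℕ} (hab : a ≠ b) : ⁅move a b, move b a⁆ = occ b - occ a := by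
  refine lhom_ext fun S x => ?_
  by_cases ha : a ∈ S <;> by_cases hb : b ∈ S <;>
    simp [Ring.lie_def, move_single, occ_single, *, hab.symm]

lemma lie_occ_move {a b : ℕ} (hab : a ≠ b) (k : ℕ) :
    ⁅occ k, move a b⁆ = ((if k = b then 1 else 0) - (if k = a then 1 else 0) : ℚ) • move a b := by
  refine lhom_ext fun S x => ?_
  simp only [Ring.lie_def, LinearMap.sub_apply, Module.End.mul_apply, LinearMap.smul_apply,
    move_single, occ_single]
  by_cases h : a ∈ S ∧ b ∉ S
  · rw [if_pos h]
    by_cases hk : k ∈ S <;> rcases eq_or_ne k a with rfl | hka <;>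
      rcases eq_or_ne k b with rfl | hkb <;> simp_all [occ_single, move_single]
  · by_cases hk : k ∈ S <;> simp [h, hk, move_single]

lemma lie_move_move_of_ne {i j : ℕ} (hij : i ≠ j) : ⁅move i (i + 1), move (j + 1) j⁆ = 0 := by
  rw [Ring.lie_def, sub_eq_zero]
  rcases eq_or_ne j (i + 1) with rfl | h1
  · rw [move_mul_move_same_target, move_mul_move_same_target]
  rcases eq_or_ne i (j + 1) with rfl | h2
  · rw [move_mul_move_same_source, move_mul_move_same_source]
  exact move_mul_move_comm h2 hij (by omega) (by omega)

lemma sum_lie' {ι : Type*} (s : Finset ι) (x : ι → Module.End ℚ 𝕍) (y : Module.End ℚ 𝕍) :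
    ⁅∑ i ∈ s, x i, y⁆ = ∑ i ∈ s, ⁅x i, y⁆ := by
  simp only [Ring.lie_def, Finset.sum_mul, Finset.mul_sum, sum_sub_distrib]

lemma lie_sum' {ι : Type*} (s : Finset ι) (x : Module.End ℚ 𝕍) (y : ι → Module.End ℚ 𝕍) :
    ⁅x, ∑ i ∈ s, y i⁆ = ∑ i ∈ s, ⁅x, y i⁆ := by
  simp only [Ring.lie_def, Finset.sum_mul, Finset.mul_sum, sum_sub_distrib]

lemma smul_lie' (c : ℚ) (x y : Module.End ℚ 𝕍) : ⁅c • x, y⁆ = c • ⁅x, y⁆ := by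
  simp only [Ring.lie_def, smul_mul_assoc, mul_smul_comm, smul_sub]

lemma lie_smul' (c : ℚ) (x y : Module.End ℚ 𝕍) : ⁅x, c • y⁆ = c • ⁅x, y⁆ := by
  simp only [Ring.lie_def, smul_mul_assoc, mul_smul_comm, smul_sub]

lemma sum_smul_sub_telescope (M : Type*) [AddCommGroup M] [Module ℚ M] (N : ℕ) (g : ℕ → M) :
    ∑ i ∈ range (N - 1), (((i : ℚ) + 1) * (N - 1 - i)) • (g (i + 1) - g i)
      = ∑ k ∈ range N, (2 * (k : ℚ) + 1 - N) • g k := by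
  rcases N with _ | K
  · simp
  have split : ∀ k : ℕ, (2 * (k : ℚ) + 1 - (K + 1 : ℕ)) • g k
      = ((k : ℚ) * (K + 1 - k)) • g k - (((k : ℚ) + 1) * (K - k)) • g k := by
    intro k
    rw [← sub_smul]
    push_cast
    ring_nf
  simp only [split, sum_sub_distrib, smul_sub, Nat.add_sub_cancel]
  rw [sum_range_succ', sum_range_succ]
  push_cast
  simp only [zero_mul, zero_smul, add_zero, sub_self, mul_zero]
  congr 1
  all_goals refine sum_congr rfl fun i _ => ?_; congr 1; ring

variable (N : ℕ)

noncomputable def raise : Module.End ℚ 𝕍 := ∑ i ∈ range (N - 1), move i (i + 1)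

/-- The weights `(i + 1) * (N - 1 - i)` make `⁅raise N, lower N⁆` telescope to `weight N`. -/
noncomputable def lower : Module.End ℚ 𝕍 :=
  ∑ i ∈ range (N - 1), (((i : ℚ) + 1) * (N - 1 - i)) • move (i + 1) i

noncomputable def weight : Module.End ℚ 𝕍 :=
  ∑ k ∈ range N, (2 * (k : ℚ) + 1 - N) • occ k

lemma lie_raise_lower : ⁅raise N, lower N⁆ = weight N := by
  simp only [raise, lower, sum_lie', lie_sum', lie_smul']
  refine Eq.trans (sum_congr rfl fun i _ => ?_) (sum_smul_sub_telescope _ N occ)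
  rw [sum_eq_single i (fun j _ hji => lie_move_move_of_ne hji) (fun h => absurd ‹_› h),
    lie_move_move_swap (by omega)]

lemma lie_weight_move {a b : ℕ} (ha : a < N) (hb : b < N) (hab : a ≠ b) :
    ⁅weight N, move a b⁆ = (2 * ((b : ℚ) - a)) • move a b := by
  simp only [weight, sum_lie', smul_lie', lie_occ_move hab, smul_smul, ← sum_smul]
  congr 1
  simp only [mul_sub, mul_ite, mul_one, mul_zero, sum_sub_distrib, Finset.sum_ite_eq', mem_range,
    ha, hb, if_true]
  ring

lemma lie_weight_raise : ⁅weight N, raise N⁆ = 2 • raise N := by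
  simp only [raise, lie_sum', Finset.smul_sum]
  refine sum_congr rfl fun i hi => ?_
  rw [mem_range] at hi
  rw [lie_weight_move N (by omega) (by omega) (by omega), two_nsmul, ← two_smul ℚ]
  push_cast
  ring_nf

lemma lie_weight_lower : ⁅weight N, lower N⁆ = -(2 • lower N) := by
  simp only [lower, lie_sum', Finset.smul_sum, lie_smul', ← sum_neg_distrib]
  refine sum_congr rfl fun i hi => ?_
  rw [mem_range] at hi
  rw [lie_weight_move N (by omega) (by omega) (by omega), smul_comm, two_nsmul, ← two_smul ℚ,
    ← neg_smul]
  push_cast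
  ring_nf

lemma isSl2Triple (hN : weight N ≠ 0) : IsSl2Triple (weight N) (raise N) (lower N) where
  h_ne_zero := hN
  lie_e_f := lie_raise_lower N
  lie_h_e_nsmul := lie_weight_raise N
  lie_h_f_nsmul := lie_weight_lower N

lemma weight_single {S : Finset ℕ} (hS : S ⊆ range N) (c : ℚ) :
    weight N (single S c) = (∑ k ∈ S, (2 * (k : ℚ) + 1 - N)) • single S c := by
  simp only [weight, LinearMap.sum_apply, LinearMap.smul_apply, occ_single, smul_ite, smul_zero,
    sum_ite_mem, inter_eq_right.mpr hS, sum_smul]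

lemma mem_supported_of_single {φ : Module.End ℚ 𝕍} {A B : Set (Finset ℕ)}
    (h : ∀ S ∈ A, φ (single S 1) ∈ supported ℚ ℚ B) {v : 𝕍} (hv : v ∈ supported ℚ ℚ A) :
    φ v ∈ supported ℚ ℚ B := by
  rw [Finsupp.supported_eq_span_single] at hv
  refine (Submodule.span_le (p := (supported ℚ ℚ B).comap φ)).mpr ?_ hv
  rintro _ ⟨S, hS, rfl⟩
  exact h S hS

lemma move_single_mem_supported {a b : ℕ} {S : Finset ℕ} {B : Set (Finset ℕ)}
    (h : a ∈ S → b ∉ S → insert b (S.erase a) ∈ B) :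
    move a b (single S 1) ∈ supported ℚ ℚ B := by
  rw [move_single]
  split_ifs with hab
  · exact single_mem_supported ℚ 1 (h hab.1 hab.2)
  · exact zero_mem _

lemma pow_apply_eq_zero_of_lowers_degree {φ : Module.End ℚ 𝕍} (deg : Finset ℕ → ℕ)
    (hφ : ∀ S, φ (single S 1) ∈ supported ℚ ℚ {T | deg T + 1 = deg S}) (d : ℕ) {v : 𝕍}
    (hv : v ∈ supported ℚ ℚ {S | deg S < d}) : (φ ^ d) v = 0 := by
  induction d generalizing v with
  | zero => simpa using hv
  | succ d ih =>
    rw [pow_succ, Module.End.mul_apply]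
    refine ih (mem_supported_of_single (fun S (hS : deg S < d + 1) => ?_) hv)
    exact Finsupp.supported_mono (fun T (hT : deg T + 1 = deg S) => show deg T < d by omega) (hφ S)

lemma card_le_card_of_injOn_supported {φ : Module.End ℚ 𝕍} {A B : Finset (Finset ℕ)}
    (hmap : ∀ v ∈ supported ℚ ℚ (A : Set (Finset ℕ)), φ v ∈ supported ℚ ℚ (B : Set (Finset ℕ)))
    (hinj : ∀ v ∈ supported ℚ ℚ (A : Set (Finset ℕ)), φ v = 0 → v = 0) : #A ≤ #B := by
  have hψ : Function.Injective (φ.restrict hmap) := by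
    rw [← LinearMap.ker_eq_bot, LinearMap.ker_eq_bot']
    exact fun v hv => Subtype.ext (hinj v v.2 (congrArg Subtype.val hv))
  have : Module.Finite ℚ (supported ℚ ℚ (B : Set (Finset ℕ))) :=
    Module.Finite.equiv (Finsupp.supportedEquivFinsupp _).symm
  simpa [(Finsupp.supportedEquivFinsupp _).finrank_eq, Module.finrank_finsupp_self] using
    LinearMap.finrank_le_finrank_of_injective hψ

variable {N} {n : ℕ}

lemma raise_mem_supported {s : ℕ} {v : 𝕍} (hv : v ∈ supported ℚ ℚ ↑(subsetsWithSum N n s)) :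
    raise N v ∈ supported ℚ ℚ ↑(subsetsWithSum N n (s + 1)) := by
  refine mem_supported_of_single (fun S hS => ?_) hv
  rw [raise, LinearMap.sum_apply]
  refine Submodule.sum_mem _ fun i hi => move_single_mem_supported fun ha hb => ?_
  exact insert_erase_mem_subsetsWithSum hS (by rw [mem_range] at hi; omega) ha hb (by omega)

lemma lower_mem_supported {s : ℕ} {v : 𝕍} (hv : v ∈ supported ℚ ℚ ↑(subsetsWithSum N n (s + 1))) :
    lower N v ∈ supported ℚ ℚ ↑(subsetsWithSum N n s) := by
  refine mem_supported_of_single (fun S hS => ?_) hv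
  rw [lower, LinearMap.sum_apply]
  refine Submodule.sum_mem _ fun i hi => ?_
  rw [LinearMap.smul_apply]
  refine Submodule.smul_mem _ _ (move_single_mem_supported fun ha hb => ?_)
  exact insert_erase_mem_subsetsWithSum hS (by rw [mem_range] at hi; omega) ha hb (by omega)

lemma lower_single_mem_supported (S : Finset ℕ) :
    lower N (single S 1) ∈ supported ℚ ℚ {T | ∑ i ∈ T, i + 1 = ∑ i ∈ S, i} := by
  rw [lower, LinearMap.sum_apply]
  refine Submodule.sum_mem _ fun i _ => ?_
  rw [LinearMap.smul_apply]
  refine Submodule.smul_mem _ _ (move_single_mem_supported fun ha hb => ?_)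
  have := sum_insert_erase_add id ha hb
  simp only [id] at this
  show ∑ k ∈ insert i (S.erase (i + 1)), k + 1 = ∑ k ∈ S, k
  omega

lemma raise_single_mem_supported (S : Finset ℕ) :
    raise N (single S 1) ∈ supported ℚ ℚ {T | ∑ i ∈ T, (N - 1 - i) + 1 = ∑ i ∈ S, (N - 1 - i)} := by
  rw [raise, LinearMap.sum_apply]
  refine Submodule.sum_mem _ fun i hi => move_single_mem_supported fun ha hb => ?_
  have := sum_insert_erase_add (fun k => N - 1 - k) ha hb
  rw [mem_range] at hi
  show ∑ k ∈ insert (i + 1) (S.erase i), (N - 1 - k) + 1 = ∑ k ∈ S, (N - 1 - k)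
  omega

lemma weight_apply_of_mem_supported {s : ℕ} {v : 𝕍}
    (hv : v ∈ supported ℚ ℚ ↑(subsetsWithSum N n s)) :
    weight N v = (2 * (s : ℚ) + n - n * N) • v := by
  rw [Finsupp.supported_eq_span_single] at hv
  have := (Submodule.span_le (p := LinearMap.ker (weight N - (2 * (s : ℚ) + n - n * N) • 1))).mpr
    ?_ hv
  · simpa [sub_eq_zero] using this
  rintro _ ⟨S, hS, rfl⟩
  obtain ⟨hsub, hcard, hsum⟩ := mem_subsetsWithSum.mp hS
  simp only [SetLike.mem_coe, LinearMap.mem_ker, LinearMap.sub_apply, LinearMap.smul_apply,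
    Module.End.one_apply, weight_single N hsub, sub_eq_zero]
  congr 1
  simp only [sum_add_distrib, sum_sub_distrib, ← mul_sum, sum_const, hcard, nsmul_eq_mul]
  rw [← hsum]
  push_cast
  ring

lemma weight_ne_zero_of_mem_supported {s : ℕ} {v : 𝕍}
    (hv : v ∈ supported ℚ ℚ ↑(subsetsWithSum N n s)) (hv0 : v ≠ 0)
    (hμ : 2 * (s : ℚ) + n - n * N ≠ 0) : weight N ≠ 0 := by
  intro h
  have := weight_apply_of_mem_supported hv
  rw [h, LinearMap.zero_apply, eq_comm, smul_eq_zero] at this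
  exact this.elim hμ hv0

lemma eq_zero_of_raise_eq_zero {s : ℕ} (hs : 2 * s + 1 ≤ n * (N - 1)) {v : 𝕍}
    (hv : v ∈ supported ℚ ℚ ↑(subsetsWithSum N n s)) (h0 : raise N v = 0) : v = 0 := by
  by_contra hv0
  have hμ : 2 * (s : ℚ) + n - n * N < 0 := by
    have : ((2 * s + 1 : ℕ) : ℚ) ≤ (n * (N - 1) : ℕ) := by exact_mod_cast hs
    push_cast [Nat.cast_sub (show 1 ≤ N by rcases N with _ | _ <;> simp_all)] at this
    linarith
  refine hv0 (IsSl2Triple.eq_zero_of_lie_e_eq_zero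
    (isSl2Triple N (weight_ne_zero_of_mem_supported hv hv0 hμ.ne)) hμ
    (weight_apply_of_mem_supported hv) h0 (k := s + 1)
    (pow_apply_eq_zero_of_lowers_degree _ lower_single_mem_supported (s + 1)
      (Finsupp.supported_mono (fun S hS => ?_) hv)))
  show ∑ i ∈ S, i < s + 1
  rw [(mem_subsetsWithSum.mp hS).2.2]
  omega

lemma eq_zero_of_lower_eq_zero {s : ℕ} (hs : n * (N - 1) + 1 ≤ 2 * s) {v : 𝕍}
    (hv : v ∈ supported ℚ ℚ ↑(subsetsWithSum N n s)) (h0 : lower N v = 0) : v = 0 := by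
  by_contra hv0
  have hμ : -(2 * (s : ℚ) + n - n * N) < 0 := by
    have : ((n * (N - 1) + 1 : ℕ) : ℚ) ≤ (2 * s : ℕ) := by exact_mod_cast hs
    rcases N with _ | N <;> push_cast at this ⊢ <;> linarith
  refine hv0 (IsSl2Triple.eq_zero_of_lie_e_eq_zero
    (isSl2Triple N (weight_ne_zero_of_mem_supported hv hv0 (neg_ne_zero.mp hμ.ne))).symm hμ
    (by rw [Module.End.lie_apply, LinearMap.neg_apply, weight_apply_of_mem_supported hv, neg_smul])
    h0
    (k := n * (N - 1) - s + 1)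
    (pow_apply_eq_zero_of_lowers_degree _ raise_single_mem_supported _
      (Finsupp.supported_mono (fun S hS => ?_) hv)))
  show ∑ i ∈ S, (N - 1 - i) < n * (N - 1) - s + 1
  have := sum_sub_add_sum_of_mem_subsetsWithSum hS
  omega

theorem isUnimodal_card_subsetsWithSum (N n : ℕ) :
    IsUnimodal fun s => #(subsetsWithSum N n s) := by
  refine ⟨n * (N - 1) / 2, fun s hs => ?_, fun s hs => ?_⟩
  · exact card_le_card_of_injOn_supported (fun v hv => raise_mem_supported hv)
      (fun v hv => eq_zero_of_raise_eq_zero (by omega) hv)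
  · exact card_le_card_of_injOn_supported (fun v hv => lower_mem_supported hv)
      (fun v hv => eq_zero_of_lower_eq_zero (by omega) hv)

end Sl2Subsets

/-! ### Gaussian polynomials -/

noncomputable def gaussBinom : ℕ → ℕ → ℕ[X]
  | _, 0 => 1
  | 0, _ + 1 => 0
  | N + 1, k + 1 => gaussBinom N (k + 1) + X ^ (N - k) * gaussBinom N k

lemma gaussBinom_eq_zero_of_lt : ∀ {N n : ℕ}, N < n → gaussBinom N n = 0
  | 0, _ + 1, _ => rfl
  | N + 1, k + 1, h => by
    rw [gaussBinom, gaussBinom_eq_zero_of_lt (by omega), gaussBinom_eq_zero_of_lt (by omega),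
      mul_zero, add_zero]

theorem X_pow_mul_gaussBinom : ∀ N n : ℕ, X ^ n.choose 2 * gaussBinom N n = subsetSumPoly N n
  | N, 0 => by simp [gaussBinom, subsetSumPoly_zero_right]
  | 0, k + 1 => by
    rw [gaussBinom, mul_zero, subsetSumPoly, range_zero, powersetCard_eq_empty.mpr (by simp),
      sum_empty]
  | N + 1, k + 1 => by
    rw [gaussBinom, mul_add, X_pow_mul_gaussBinom N (k + 1), subsetSumPoly_succ_succ,
      ← X_pow_mul_gaussBinom N k]
    congr 1
    rcases le_or_gt k N with hk | hk
    · have hc : (k + 1).choose 2 = k.choose 2 + k := by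
        rw [Nat.choose_succ_succ', Nat.choose_one_right, add_comm]
      rw [← mul_assoc, ← mul_assoc, ← pow_add, ← pow_add, hc]
      congr 2
      omega
    · simp [gaussBinom_eq_zero_of_lt hk]

lemma isUnimodal_coeff_gaussBinom (N n : ℕ) : IsUnimodal (gaussBinom N n).coeff := by
  have : (gaussBinom N n).coeff = fun s => #(subsetsWithSum N n (s + n.choose 2)) := by
    ext s
    rw [← coeff_subsetSumPoly, ← X_pow_mul_gaussBinom, coeff_X_pow_mul]
  rw [this]
  exact (Sl2Subsets.isUnimodal_card_subsetsWithSum N n).comp_add _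

lemma sum_powersetCard_range_eq_sum_fin {M : Type*} [AddCommMonoid M] (N n : ℕ)
    (F : Finset ℕ → M) : ∑ S ∈ (range N).powersetCard n, F S
      = ∑ S ∈ (univ : Finset (Fin N)).powersetCard n, F (S.map Fin.valEmbedding) := by
  rw [← Nat.Iio_eq_range, ← Fin.map_valEmbedding_univ, powersetCard_map, sum_map]
  rfl

lemma pow_mul_sum_powersetCard {R : Type*} [CommSemiring R] {x : R} {N : ℕ} (hx : x ^ N = 1)
    (n : ℕ) : x ^ n * ∑ S ∈ (range N).powersetCard n, x ^ ∑ i ∈ S, i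
      = ∑ S ∈ (range N).powersetCard n, x ^ ∑ i ∈ S, i := by
  rcases N with _ | K
  · rcases n with _ | n
    · simp
    · rw [range_zero, powersetCard_eq_empty.mpr (by simp), sum_empty, mul_zero]
  have hrot : ∀ i : Fin (K + 1), x ^ (finRotate (K + 1) i : ℕ) = x * x ^ (i : ℕ) := by
    intro i
    rcases eq_or_ne i (Fin.last K) with rfl | hi
    · rw [finRotate_last, Fin.val_zero, pow_zero, Fin.val_last, ← pow_succ', hx]
    · rw [coe_finRotate_of_ne_last hi, pow_succ']
  simp only [sum_powersetCard_range_eq_sum_fin, sum_map, Fin.valEmbedding_apply, mul_sum]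
  conv_rhs => rw [← map_univ_equiv (finRotate (K + 1)), powersetCard_map, sum_map]
  refine sum_congr rfl fun S hS => ?_
  simp only [RelEmbedding.coe_toEmbedding, mapEmbedding_apply, sum_map, Equiv.coe_toEmbedding,
    ← prod_pow_eq_pow_sum, hrot, prod_mul_distrib, prod_const, (mem_powersetCard.mp hS).2]

theorem X_pow_sub_one_dvd_X_sub_one_mul_subsetSumPoly {N n : ℕ} (hcop : n.Coprime N) :
    (X ^ N - 1 : ℤ[X]) ∣ (X - 1) * (subsetSumPoly N n).map (Nat.castRingHom ℤ) := by
  rw [← AdjoinRoot.mk_eq_zero]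
  set x := AdjoinRoot.root (X ^ N - 1 : ℤ[X])
  have hx : x ^ N = 1 := by
    have := AdjoinRoot.mk_self (f := (X ^ N - 1 : ℤ[X]))
    rwa [map_sub, map_pow, AdjoinRoot.mk_X, map_one, sub_eq_zero] at this
  obtain ⟨k, hk⟩ := exists_pow_eq_self_of_coprime
    (hcop.coprime_dvd_right (orderOf_dvd_of_pow_eq_one hx))
  set g := ∑ S ∈ (range N).powersetCard n, x ^ ∑ i ∈ S, i
  have hg : ∀ j, (x ^ n) ^ j * g = g := by
    intro j
    induction j with
    | zero => rw [pow_zero, one_mul]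
    | succ j ih => rw [pow_succ, mul_assoc, pow_mul_sum_powersetCard hx, ih]
  have : AdjoinRoot.mk (X ^ N - 1) ((X - 1) * (subsetSumPoly N n).map (Nat.castRingHom ℤ))
      = (x - 1) * g := by
    simp [subsetSumPoly, Polynomial.map_sum, x, g]
  rw [this, sub_mul, one_mul, ← hk, hg, sub_self]

lemma isCoprime_X_pow_sub_one_X {N : ℕ} (hN : 0 < N) : IsCoprime (X ^ N - 1 : ℤ[X]) X :=
  ⟨-1, X ^ (N - 1), by rw [← pow_succ, Nat.sub_add_cancel hN]; ring⟩

theorem geom_sum_dvd_gaussBinom {N n : ℕ} (hN : 0 < N) (hcop : n.Coprime N) :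
    (∑ i ∈ range N, X ^ i : ℤ[X]) ∣ (gaussBinom N n).map (Nat.castRingHom ℤ) := by
  have h := X_pow_sub_one_dvd_X_sub_one_mul_subsetSumPoly hcop
  rw [← X_pow_mul_gaussBinom, Polynomial.map_mul, Polynomial.map_pow, Polynomial.map_X] at h
  have h' : (X ^ N - 1 : ℤ[X]) ∣
      (X - 1) * (gaussBinom N n).map (Nat.castRingHom ℤ) * X ^ n.choose 2 := by
    convert h using 1
    ring
  have h'' := ((isCoprime_X_pow_sub_one_X hN).pow_right (n := n.choose 2)).dvd_of_dvd_mul_right h'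
  rw [← mul_geom_sum] at h''
  exact (mul_dvd_mul_iff_left (X_sub_C_ne_zero (1 : ℤ))).mp h''

/-! ### The `q`-analogues as rational functions -/

lemma q_eq_algebraMap_X : q = algebraMap ℚ[X] (RatFunc ℚ) X := RatFunc.algebraMap_X.symm

lemma q_ne_one : q ≠ 1 := by
  rw [q_eq_algebraMap_X, ← map_one (algebraMap ℚ[X] (RatFunc ℚ))]
  exact (RatFunc.algebraMap_injective ℚ).ne (C_1 (R := ℚ) ▸ X_ne_C 1)

lemma algebraMap_geom_sum (k : ℕ) :
    algebraMap ℚ[X] (RatFunc ℚ) (∑ i ∈ range k, X ^ i) = qint q k := by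
  rw [map_sum, qint]
  simp only [map_pow, ← q_eq_algebraMap_X]
  rw [geom_sum_eq q_ne_one, ← neg_sub 1 (q ^ k), ← neg_sub 1 q, neg_div_neg_eq]

lemma qint_ne_zero {k : ℕ} (hk : 0 < k) : qint q k ≠ 0 := by
  rw [← algebraMap_geom_sum, map_ne_zero_iff _ (RatFunc.algebraMap_injective ℚ)]
  intro h
  simpa [eval_finsetSum, hk.ne'] using congrArg (eval 1) h

lemma qfact_ne_zero : ∀ k, qfact q k ≠ 0
  | 0 => one_ne_zero
  | k + 1 => mul_ne_zero (qint_ne_zero k.succ_pos) (qfact_ne_zero k)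

lemma qint_add (a b : ℕ) : qint q (a + b) = qint q a + q ^ a * qint q b := by
  rw [← algebraMap_geom_sum, ← algebraMap_geom_sum, ← algebraMap_geom_sum, q_eq_algebraMap_X,
    ← map_pow, ← map_mul, ← map_add, sum_range_add, mul_sum]
  simp only [pow_add]

lemma qbinom_zero_right (N : ℕ) : qbinom q N 0 = 1 := by
  rw [qbinom, Nat.sub_zero, qfact, one_mul, div_self (qfact_ne_zero N)]

lemma qbinom_self (N : ℕ) : qbinom q N N = 1 := by
  rw [qbinom, Nat.sub_self, qfact, mul_one, div_self (qfact_ne_zero N)]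

lemma qbinom_succ_succ {N k : ℕ} (h : k < N) :
    qbinom q (N + 1) (k + 1) = qbinom q N (k + 1) + q ^ (N - k) * qbinom q N k := by
  obtain ⟨j, rfl⟩ : ∃ j, N = k + 1 + j := ⟨N - (k + 1), by omega⟩
  have hN : qint q (k + 1 + j + 1) = qint q (j + 1) + q ^ (j + 1) * qint q (k + 1) := by
    rw [← qint_add]
    ring_nf
  simp only [qbinom, show k + 1 + j + 1 - (k + 1) = j + 1 by omega,
    show k + 1 + j - (k + 1) = j by omega, show k + 1 + j - k = j + 1 by omega, qfact, hN]
  have := qfact_ne_zero k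
  have := qfact_ne_zero j
  have := qint_ne_zero k.succ_pos
  have := qint_ne_zero j.succ_pos
  field_simp

theorem algebraMap_gaussBinom : ∀ {N n : ℕ}, n ≤ N →
    algebraMap ℚ[X] (RatFunc ℚ) ((gaussBinom N n).map (Nat.castRingHom ℚ)) = qbinom q N n
  | N, 0, _ => by simp [gaussBinom, qbinom_zero_right]
  | N + 1, k + 1, h => by
    rcases Nat.lt_or_ge k N with hk | hk
    · rw [gaussBinom, Polynomial.map_add, Polynomial.map_mul, Polynomial.map_pow,
        Polynomial.map_X, map_add, map_mul, map_pow, ← q_eq_algebraMap_X,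
        algebraMap_gaussBinom hk, algebraMap_gaussBinom hk.le, qbinom_succ_succ hk]
    · obtain rfl : k = N := by omega
      rw [gaussBinom, gaussBinom_eq_zero_of_lt (Nat.lt_succ_self k), Nat.sub_self, pow_zero,
        one_mul, zero_add, algebraMap_gaussBinom le_rfl, qbinom_self, qbinom_self]

theorem stmt_1_general (m n : ℕ) (h : Nat.Coprime m n) :
    ∃ P : Polynomial ℕ,
      algebraMap (Polynomial ℚ) (RatFunc ℚ) (P.map (Nat.castRingHom ℚ)) = qCat q m n := by
  have hN : 0 < m + n := Nat.pos_of_ne_zero fun h0 => by simp_all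
  have hcop : n.Coprime (m + n) := Nat.coprime_add_self_right.mpr h.symm
  obtain ⟨P, hP⟩ := geom_sum_dvd_of_isUnimodal hN (isUnimodal_coeff_gaussBinom _ _)
    (geom_sum_dvd_gaussBinom hN hcop)
  refine ⟨P, ?_⟩
  have hq := algebraMap_gaussBinom (N := m + n) (n := n) (by omega)
  rw [hP, Polynomial.map_mul, map_mul, Polynomial.map_sum] at hq
  simp only [Polynomial.map_pow, Polynomial.map_X, algebraMap_geom_sum] at hq
  rw [qCat, ← hq, ← mul_assoc, inv_mul_cancel₀ (qint_ne_zero hN), one_mul]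

theorem stmt_1 (m n : ℕ) (hm : 0 < m) (hn : 0 < n) (h : Nat.Coprime m n) :
    ∃ P : Polynomial ℕ,
      algebraMap (Polynomial ℚ) (RatFunc ℚ) (P.map (Nat.castRingHom ℚ)) = qCat q m n :=
  stmt_1_general m n h
end

section
/- For every nonnegative integer k, (q^2-1)·C_{3,3k+1}(q) = (q^{3k+2}-1)·(1 + q^3 + q^6 + ... + q^{3k}) as polynomials in q, where C_{3,n}(q) = (1/[n+3]_q)·qbinom(n+3,n). -/
open Polynomial

lemma one_sub_q_pow_ne (n : ℕ) (hn : 0 < n) : (1 : RatFunc ℚ) - q ^ n ≠ 0 := by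
  have h : (1 : RatFunc ℚ) - q ^ n
      = algebraMap ℚ[X] (RatFunc ℚ) (1 - X ^ n) := by
    simp [q, map_sub, map_pow]
  rw [h]
  apply RatFunc.algebraMap_ne_zero
  intro hc
  have h1 : (1 : ℚ[X]) = X ^ n := sub_eq_zero.mp hc
  have := congrArg natDegree h1
  simp [natDegree_X_pow] at this
  omega

lemma qint_ne (n : ℕ) (hn : 0 < n) : qint q n ≠ 0 :=
  div_ne_zero (one_sub_q_pow_ne n hn) (by simpa using one_sub_q_pow_ne 1 one_pos)

lemma qfact_ne (n : ℕ) : qfact q n ≠ 0 := by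
  induction n with
  | zero => simp [qfact]
  | succ m ih => exact mul_ne_zero (qint_ne _ m.succ_pos) ih

lemma qfact_add_three (t : RatFunc ℚ) (m : ℕ) :
    qfact t (m + 3) = qint t (m + 3) * qint t (m + 2) * qint t (m + 1) * qfact t m := by
  show qint t (m + 2 + 1) * (qint t (m + 1 + 1) * (qint t (m + 1) * qfact t m)) = _
  ring_nf

set_option maxHeartbeats 1000000 in
theorem stmt_6 (k : ℕ) :
    (q ^ 2 - 1) * qCat q 3 (3 * k + 1)
      = (q ^ (3 * k + 2) - 1) * ∑ i ∈ Finset.range (k + 1), q ^ (3 * i) := by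
  have h1 := one_sub_q_pow_ne 1 (by omega)
  have h2 := one_sub_q_pow_ne 2 (by omega)
  have h3 := one_sub_q_pow_ne 3 (by omega)
  have hn1 := one_sub_q_pow_ne (3*k+2) (by omega)
  have hn2 := one_sub_q_pow_ne (3*k+3) (by omega)
  have hn4 := one_sub_q_pow_ne (3*k+1+3) (by omega)
  have hf := qfact_ne (3*k+1)
  rw [pow_one] at h1
  have hq3 : qfact q 3 = (1-q^3)/(1-q) * ((1-q^2)/(1-q)) := by
    show qint q 3 * (qint q 2 * (qint q 1 * 1)) = _
    simp [qint, div_self h1]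
  have hS : (∑ i ∈ Finset.range (k+1), q^(3*i)) = (q^(3*(k+1)) - 1)/(q^3-1) := by
    rw [eq_div_iff (by rw [show (q^3 - 1 : RatFunc ℚ) = -(1 - q^3) from by ring, neg_ne_zero]; exact h3)]
    simpa [pow_mul] using geom_sum_mul (q^3) (k+1)
  have hb : qCat q 3 (3*k+1)
      = qint q (3*k+1+2) * qint q (3*k+1+1) / qfact q 3 := by
    rw [qCat, qbinom, show 3 + (3*k+1) = (3*k+1)+3 from by ring,
      show (3*k+1)+3 - (3*k+1) = 3 from by omega, qfact_add_three]
    have hi4 := qint_ne (3*k+1+3) (by omega)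
    set A := qint q (3*k+1+3) with hA
    set B := qint q (3*k+1+2) with hB
    set C := qint q (3*k+1+1) with hC
    set f := qfact q (3*k+1) with hfd
    set F := qfact q 3 with hF
    have hFne : F ≠ 0 := qfact_ne 3
    field_simp
  rw [hb, hq3, hS, qint, qint]
  have h3' : (q^3 - 1 : RatFunc ℚ) ≠ 0 := by
    rw [show (q^3 - 1 : RatFunc ℚ) = -(1 - q^3) from by ring, neg_ne_zero]; exact h3
  field_simp
  ring
end

section
/- For every nonnegative integer k, (q^2-1)·C_{4,12k+1}(q) = (q^{12k+2}-1)·(∑_{i=0}^{4k} q^{3i})·(∑_{j=0}^{3k} q^{4j}), where C_{4,n}(q) = (1/[n+4]_q)·qbinom(n+4,n). -/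
/-!
Since `C_{4,n} = [n+3][n+2][n+1] / ([4][3][2])`, for `n = 12k+1` the factors
`[12k+4] = [4]·∑ q^{4j}` and `[12k+3] = [3]·∑ q^{3i}` cancel `[4]` and `[3]`, and
`(q^2 - 1)·[12k+2] / [2] = q^{12k+2} - 1`.
-/

open Polynomial

lemma q_pow_ne_one {n : ℕ} (hn : n ≠ 0) : q ^ n ≠ 1 := by
  intro h
  rw [q, ← RatFunc.algebraMap_X, ← map_pow, ← map_one (algebraMap ℚ[X] (RatFunc ℚ))] at h
  simpa [hn] using congrArg natDegree (RatFunc.algebraMap_injective ℚ h)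

section

variable {t : RatFunc ℚ}

lemma qfact_succ (t : RatFunc ℚ) (n : ℕ) : qfact t (n + 1) = qint t (n + 1) * qfact t n := rfl

lemma qint_one (ht : t ≠ 1) : qint t 1 = 1 := by
  rw [qint, pow_one, div_self (sub_ne_zero.mpr ht.symm)]

lemma one_sub_pow_ne_zero (ht : ∀ n, n ≠ 0 → t ^ n ≠ 1) {n : ℕ} (hn : n ≠ 0) : 1 - t ^ n ≠ 0 :=
  sub_ne_zero.mpr (ht n hn).symm

lemma qint_ne_zero_s8 (ht : ∀ n, n ≠ 0 → t ^ n ≠ 1) {n : ℕ} (hn : n ≠ 0) : qint t n ≠ 0 :=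
  div_ne_zero (one_sub_pow_ne_zero ht hn) (by simpa using one_sub_pow_ne_zero ht one_ne_zero)

lemma qfact_ne_zero_s8 (ht : ∀ n, n ≠ 0 → t ^ n ≠ 1) (n : ℕ) : qfact t n ≠ 0 := by
  induction n with
  | zero => exact one_ne_zero
  | succ n ih => exact mul_ne_zero (qint_ne_zero_s8 ht n.succ_ne_zero) ih

lemma qCat_succ (ht : ∀ n, n ≠ 0 → t ^ n ≠ 1) (m n : ℕ) :
    qCat t (m + 1) n = qfact t (m + n) / (qfact t n * qfact t (m + 1)) := by
  rw [qCat, qbinom, Nat.add_sub_cancel, show m + 1 + n = m + n + 1 by omega, qfact_succ]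
  have := qint_ne_zero_s8 ht (m + n).succ_ne_zero
  field_simp

lemma qCat_four (ht : ∀ n, n ≠ 0 → t ^ n ≠ 1) (n : ℕ) :
    qCat t 4 n = qint t (n + 3) * qint t (n + 2) * qint t (n + 1) /
      (qint t 4 * qint t 3 * qint t 2) := by
  rw [qCat_succ ht, show 3 + n = n + 2 + 1 by omega]
  simp only [qfact, qint_one (by simpa using ht 1 one_ne_zero)]
  have := qfact_ne_zero_s8 ht n
  field_simp

lemma qint_mul (t : RatFunc ℚ) (a b : ℕ) :
    qint t (a * b) = qint t a * ∑ i ∈ Finset.range b, t ^ (a * i) := by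
  simp only [qint, pow_mul, ← mul_neg_geom_sum (t ^ a)]
  ring

end

theorem stmt_8 (k : ℕ) :
    (q ^ 2 - 1) * qCat q 4 (12 * k + 1)
      = (q ^ (12 * k + 2) - 1) * (∑ i ∈ Finset.range (4 * k + 1), q ^ (3 * i))
          * (∑ j ∈ Finset.range (3 * k + 1), q ^ (4 * j)) := by
  have hq : ∀ n, n ≠ 0 → q ^ n ≠ 1 := fun n => q_pow_ne_one
  rw [qCat_four hq, show 12 * k + 1 + 3 = 4 * (3 * k + 1) by ring,
    show 12 * k + 1 + 2 = 3 * (4 * k + 1) by ring, qint_mul, qint_mul]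
  have h4 := qint_ne_zero_s8 hq (n := 4) (by norm_num)
  have h3 := qint_ne_zero_s8 hq (n := 3) (by norm_num)
  have h1 : 1 - q ≠ 0 := by simpa using one_sub_pow_ne_zero hq one_ne_zero
  have h2 := one_sub_pow_ne_zero hq two_ne_zero
  field_simp
  simp only [qint]
  field_simp
  ring
end

section
/- If K_n(q) = (1+q)/(1+q^n) · C_n(q) is unimodal (as a polynomial of degree (n-1)^2), and we write (1+q)·C_n(q) = ∑_i c_i q^i and K_n(q) = ∑_i k_i q^i, then c_i = k_i + k_{i-n} (with k_j = 0 for j<0 or j>(n-1)^2) and c_{i+1} - c_i ≥ 0 for all 0 < i < (n^2 - 4n - 1)/2. -/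
open Polynomial

noncomputable def Pk (k : ℕ) : Polynomial ℚ := ∑ i ∈ Finset.range k, X ^ i
noncomputable def Fm (m : ℕ) : Polynomial ℚ := ∏ k ∈ Finset.range m, Pk (k + 1)
def degF (m : ℕ) : ℕ := ∑ i ∈ Finset.range m, i

lemma one_sub_q_ne : (1 : RatFunc ℚ) - q ≠ 0 := by
  intro h
  have h1 : (1 : RatFunc ℚ) = q := by linear_combination h
  have : (algebraMap (Polynomial ℚ) (RatFunc ℚ)) 1 = algebraMap (Polynomial ℚ) (RatFunc ℚ) X := by
    simpa [q, RatFunc.algebraMap_X] using h1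
  have h2 := (IsFractionRing.injective (Polynomial ℚ) (RatFunc ℚ)) this
  have h3 := congrArg (fun p => Polynomial.coeff p 1) h2
  simp [Polynomial.coeff_one] at h3

lemma aPk (k : ℕ) : algebraMap (Polynomial ℚ) (RatFunc ℚ) (Pk k) = qint q k := by
  rw [qint, eq_div_iff one_sub_q_ne]
  have : algebraMap (Polynomial ℚ) (RatFunc ℚ) (Pk k) = ∑ i ∈ Finset.range k, q ^ i := by
    simp [Pk, map_sum, map_pow, RatFunc.algebraMap_X, q]
  rw [this]
  have := geom_sum_mul q k
  linear_combination -this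

lemma aFm (m : ℕ) : algebraMap (Polynomial ℚ) (RatFunc ℚ) (Fm m) = qfact q m := by
  induction m with
  | zero => simp [Fm, qfact]
  | succ k ih =>
    rw [Fm, Finset.prod_range_succ, map_mul, ← Fm, ih, qfact, aPk, mul_comm]

lemma Pk_eval_one (k : ℕ) : (Pk k).eval 1 = k := by simp [Pk, eval_finset_sum]

lemma Pk_ne_zero {k : ℕ} (hk : k ≠ 0) : Pk k ≠ 0 := by
  intro h
  have := Pk_eval_one k
  rw [h] at this
  simp at this
  exact hk (by exact_mod_cast this.symm.trans (Nat.cast_zero (R := ℚ)).symm)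

lemma Fm_ne_zero (m : ℕ) : Fm m ≠ 0 := by
  induction m with
  | zero => simp [Fm]
  | succ k ih =>
    rw [Fm, Finset.prod_range_succ, ← Fm]
    exact mul_ne_zero ih (Pk_ne_zero k.succ_ne_zero)

lemma natDegree_Pk (k : ℕ) : (Pk (k + 1)).natDegree ≤ k := by
  apply natDegree_sum_le_of_forall_le
  intro i hi
  simp only [Finset.mem_range] at hi
  simpa using Nat.lt_succ_iff.mp hi

lemma natDegree_Fm (m : ℕ) : (Fm m).natDegree ≤ degF m := by
  induction m with
  | zero => simp [Fm, degF]
  | succ k ih =>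
    rw [Fm, Finset.prod_range_succ, ← Fm, degF, Finset.sum_range_succ, ← degF]
    exact natDegree_mul_le.trans (add_le_add ih (natDegree_Pk k))

lemma Pk_coeff (k j : ℕ) : (Pk k).coeff j = if j < k then 1 else 0 := by
  simp [Pk, finset_sum_coeff, coeff_X_pow, Finset.sum_ite_eq, Finset.mem_range]

lemma reflect_Pk (k : ℕ) : (Pk (k + 1)).reflect k = Pk (k + 1) := by
  ext i
  rw [coeff_reflect, Pk_coeff, Pk_coeff]
  rcases le_or_gt i k with h | h
  · rw [revAt_le h]
    simp [Nat.lt_succ_iff, Nat.sub_le, h]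
  · rw [revAt_eq_self_of_lt h]

lemma reflect_Fm (m : ℕ) : (Fm m).reflect (degF m) = Fm m := by
  induction m with
  | zero => simp [Fm, degF]
  | succ k ih =>
    rw [Fm, Finset.prod_range_succ, ← Fm, degF, Finset.sum_range_succ, ← degF,
      reflect_mul _ _ (natDegree_Fm k) (natDegree_Pk k), ih, reflect_Pk]

lemma Pk_eval_zero (k : ℕ) : (Pk (k + 1)).eval 0 = 1 := by
  simp [Pk, eval_finset_sum, Finset.sum_range_succ']

lemma Fm_eval_zero (m : ℕ) : (Fm m).eval 0 = 1 := by
  induction m with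
  | zero => simp [Fm]
  | succ k ih =>
    rw [Fm, Finset.prod_range_succ, ← Fm, eval_mul, ih, Pk_eval_zero, one_mul]

lemma uni_sym {K : Polynomial ℚ} {d : ℕ} (sym : ∀ j ≤ d, K.coeff j = K.coeff (d - j))
    (k : ℕ) (inc : ∀ i < k, K.coeff i ≤ K.coeff (i + 1))
    (dec : ∀ i, k ≤ i → K.coeff (i + 1) ≤ K.coeff i)
    {j : ℕ} (hj : 2 * j + 1 ≤ d) : K.coeff j ≤ K.coeff (j + 1) := by
  rcases lt_or_ge j k with h | h
  · exact inc j h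
  · rw [sym j (by omega), sym (j + 1) (by omega)]
    have hk : k ≤ d - j - 1 := by omega
    have hdec := dec (d - j - 1) hk
    have e : d - j - 1 + 1 = d - j := by omega
    have e2 : d - (j + 1) = d - j - 1 := by omega
    rw [e] at hdec
    rw [e2]
    exact hdec

set_option maxHeartbeats 1000000 in
theorem stmt_18 (n : ℕ) (hn : 0 < n) (K Cp : Polynomial ℚ)
    -- `K_n(q) = (1+q) C_n(q) / (1+qⁿ)`, i.e. `K_n(q) * (1+qⁿ) = (1+q) C_n(q)`
    (hK : algebraMap (Polynomial ℚ) (RatFunc ℚ) K * (1 + q ^ n)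
        = (1 + q) * ((qint q (n + 1))⁻¹ * qbinom q (2 * n) n))
    (hKdeg : K.natDegree = (n - 1) ^ 2)
    -- `K_n` is unimodal
    (hKuni : ∃ k : ℕ, (∀ i < k, K.coeff i ≤ K.coeff (i + 1)) ∧
        ∀ i, k ≤ i → K.coeff (i + 1) ≤ K.coeff i)
    -- `Cp = (1+q) C_n(q)` as a polynomial
    (hC : algebraMap (Polynomial ℚ) (RatFunc ℚ) Cp
        = (1 + q) * ((qint q (n + 1))⁻¹ * qbinom q (2 * n) n)) :
    (∀ i, Cp.coeff i = K.coeff i + if i < n then 0 else K.coeff (i - n)) ∧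
      ∀ i : ℕ, 0 < i → 2 * (i : ℤ) < (n : ℤ) ^ 2 - 4 * (n : ℤ) - 1 →
        Cp.coeff i ≤ Cp.coeff (i + 1) := by
  have hinj := IsFractionRing.injective (Polynomial ℚ) (RatFunc ℚ)
  have h2n : 2 * n - n = n := by omega
  have hqb : qbinom q (2 * n) n
      = algebraMap (Polynomial ℚ) (RatFunc ℚ) (Fm (2 * n))
        / (algebraMap (Polynomial ℚ) (RatFunc ℚ) (Fm n)
          * algebraMap (Polynomial ℚ) (RatFunc ℚ) (Fm n)) := by
    rw [qbinom, h2n, aFm, aFm]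
  have hPne : algebraMap (Polynomial ℚ) (RatFunc ℚ) (Pk (n + 1)) ≠ 0 :=
    (map_ne_zero_iff _ hinj).mpr (Pk_ne_zero n.succ_ne_zero)
  have hFne : algebraMap (Polynomial ℚ) (RatFunc ℚ) (Fm n) ≠ 0 :=
    (map_ne_zero_iff _ hinj).mpr (Fm_ne_zero n)
  rw [← aPk, hqb] at hK hC
  have key : algebraMap (Polynomial ℚ) (RatFunc ℚ) K * (1 + q ^ n)
      * (algebraMap (Polynomial ℚ) (RatFunc ℚ) (Pk (n + 1))
        * (algebraMap (Polynomial ℚ) (RatFunc ℚ) (Fm n)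
          * algebraMap (Polynomial ℚ) (RatFunc ℚ) (Fm n)))
      = (1 + q) * algebraMap (Polynomial ℚ) (RatFunc ℚ) (Fm (2 * n)) := by
    rw [hK]
    field_simp
  have E : K * ((1 + X ^ n) * (Pk (n + 1) * (Fm n * Fm n))) = (1 + X) * Fm (2 * n) := by
    apply hinj
    simp only [map_mul, map_add, map_one, map_pow, RatFunc.algebraMap_X]
    rw [show (RatFunc.X : RatFunc ℚ) = q from rfl]
    linear_combination key
  have hCp : Cp = K * (1 + X ^ n) := by
    apply hinj
    simp only [map_mul, map_add, map_one, map_pow, RatFunc.algebraMap_X]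
    rw [show (RatFunc.X : RatFunc ℚ) = q from rfl, hC, ← hK]
  have part1 : ∀ i, Cp.coeff i = K.coeff i + if i < n then 0 else K.coeff (i - n) := by
    intro i
    rw [hCp, mul_add, mul_one, coeff_add, coeff_mul_X_pow']
    congr 1
    by_cases h : i < n
    · rw [if_pos h, if_neg (by omega : ¬ n ≤ i)]
    · rw [if_neg h, if_pos (by omega : n ≤ i)]
  refine ⟨part1, ?_⟩
  -- degrees and reflection
  have hKd : K.natDegree ≤ (n - 1) ^ 2 := le_of_eq hKdeg
  have hXn : (1 + X ^ n : Polynomial ℚ).natDegree ≤ n :=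
    (natDegree_add_le _ _).trans (by simp)
  have hX1 : (1 + X : Polynomial ℚ).natDegree ≤ 1 :=
    (natDegree_add_le _ _).trans (by simp)
  have hreflXn : (1 + X ^ n : Polynomial ℚ).reflect n = 1 + X ^ n := by
    have h0 : (1 + X ^ n : Polynomial ℚ) = X ^ 0 + X ^ n := by ring
    rw [h0, reflect_add, reflect_monomial, reflect_monomial, revAt_le (Nat.zero_le n),
      revAt_le (le_refl n), Nat.sub_zero, Nat.sub_self]
    try ring
  have hreflX1 : (1 + X : Polynomial ℚ).reflect 1 = 1 + X := by
    have h0 : (1 + X : Polynomial ℚ) = X ^ 0 + X ^ 1 := by ring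
    rw [h0, reflect_add, reflect_monomial, reflect_monomial, revAt_le (Nat.zero_le 1),
      revAt_le (le_refl 1), Nat.sub_zero, Nat.sub_self]
    try ring
  have hG2 : (Fm n * Fm n).natDegree ≤ degF n + degF n :=
    natDegree_mul_le.trans (add_le_add (natDegree_Fm n) (natDegree_Fm n))
  have hG1 : (Pk (n + 1) * (Fm n * Fm n)).natDegree ≤ n + (degF n + degF n) :=
    natDegree_mul_le.trans (add_le_add (natDegree_Pk n) hG2)
  have hG0 : ((1 + X ^ n) * (Pk (n + 1) * (Fm n * Fm n)) : Polynomial ℚ).natDegree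
      ≤ n + (n + (degF n + degF n)) :=
    natDegree_mul_le.trans (add_le_add hXn hG1)
  have hrG : ((1 + X ^ n) * (Pk (n + 1) * (Fm n * Fm n)) : Polynomial ℚ).reflect
      (n + (n + (degF n + degF n))) = (1 + X ^ n) * (Pk (n + 1) * (Fm n * Fm n)) := by
    rw [reflect_mul _ _ hXn hG1, reflect_mul _ _ (natDegree_Pk n) hG2,
      reflect_mul _ _ (natDegree_Fm n) (natDegree_Fm n), hreflXn, reflect_Pk, reflect_Fm]
  have hmatch : (n - 1) ^ 2 + (n + (n + (degF n + degF n))) = 1 + degF (2 * n) := by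
    obtain ⟨m, rfl⟩ : ∃ m, n = m + 1 := ⟨n - 1, by omega⟩
    have h1 := Finset.sum_range_id_mul_two (m + 1)
    have h2 := Finset.sum_range_id_mul_two (2 * (m + 1))
    have h2' : (∑ i ∈ Finset.range (2 * (m + 1)), i) * 2 = (2 * (m + 1)) * (2 * m + 1) := by
      rw [h2]; congr 1; try omega
    simp only [Nat.add_sub_cancel] at h1 ⊢
    unfold degF
    nlinarith [h1, h2']
  have hGne : ((1 + X ^ n) * (Pk (n + 1) * (Fm n * Fm n)) : Polynomial ℚ) ≠ 0 := by
    have hXnne : (1 + X ^ n : Polynomial ℚ) ≠ 0 := by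
      intro h
      have h1 := congrArg (eval 1) h
      simp at h1
    exact mul_ne_zero hXnne (mul_ne_zero (Pk_ne_zero n.succ_ne_zero)
      (mul_ne_zero (Fm_ne_zero n) (Fm_ne_zero n)))
  have hsymK : K.reflect ((n - 1) ^ 2) = K := by
    have h := congrArg (reflect ((n - 1) ^ 2 + (n + (n + (degF n + degF n))))) E
    rw [reflect_mul _ _ hKd hG0, hrG, hmatch,
      reflect_mul _ _ hX1 (natDegree_Fm (2 * n)), hreflX1, reflect_Fm, ← E] at h
    exact mul_right_cancel₀ hGne h
  have sym : ∀ j ≤ (n - 1) ^ 2, K.coeff j = K.coeff ((n - 1) ^ 2 - j) := by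
    intro j hj
    conv_lhs => rw [← hsymK]
    rw [coeff_reflect, revAt_le hj]
  have hK0 : K.coeff 0 = 1 := by
    have h := congrArg (eval 0) E
    simp only [eval_mul, eval_add, eval_one, eval_pow, eval_X, Fm_eval_zero,
      Pk_eval_zero, zero_pow hn.ne', mul_one, one_mul, add_zero] at h
    rw [coeff_zero_eq_eval_zero]
    linarith [h]
  obtain ⟨k, inc, dec⟩ := hKuni
  have step : ∀ j, 2 * j + 1 ≤ (n - 1) ^ 2 → K.coeff j ≤ K.coeff (j + 1) :=
    fun j hj => uni_sym sym k inc dec hj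
  intro i hi0 hib
  have hdbZ : 2 * (i : ℤ) + 1 ≤ (((n - 1) ^ 2 : ℕ) : ℤ) := by
    have hc : (((n - 1) ^ 2 : ℕ) : ℤ) = ((n : ℤ) - 1) ^ 2 := by
      have h1 : ((n - 1 : ℕ) : ℤ) = (n : ℤ) - 1 := by omega
      push_cast [h1]
      ring
    rw [hc, show ((n:ℤ) - 1) ^ 2 = (n:ℤ) ^ 2 - 2 * (n:ℤ) + 1 from by ring]
    have hnn : (0 : ℤ) ≤ (n : ℤ) := by positivity
    linarith [hib]
  have hdb : 2 * i + 1 ≤ (n - 1) ^ 2 := by exact_mod_cast hdbZ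
  rw [part1 i, part1 (i + 1)]
  by_cases h1 : i + 1 < n
  · rw [if_pos (by omega : i < n), if_pos h1]
    have := step i hdb
    linarith
  · by_cases h2 : i < n
    · rw [if_pos h2, if_neg (by omega : ¬ i + 1 < n)]
      have e : i + 1 - n = 0 := by omega
      rw [e, hK0]
      have := step i hdb
      linarith
    · rw [if_neg h2, if_neg (by omega : ¬ i + 1 < n)]
      have e : i + 1 - n = (i - n) + 1 := by omega
      rw [e]
      have t1 := step i hdb
      have t2 := step (i - n) (le_trans (by omega : 2 * (i - n) + 1 ≤ 2 * i + 1) hdb)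
      exact add_le_add t1 t2
end

section
/- For positive integers m, n with gcd(m,n)=1, the rational q-Catalan polynomial C_{m,n}(q) = (1/[m+n]_q)·qbinom(m+n,n) has degree (m-1)(n-1) and is symmetric: its coefficient of q^i equals its coefficient of q^{(m-1)(n-1)-i}. -/
open Polynomial Finset

/-! ### Auxiliary lemmas -/

lemma expo_le (m n d : ℕ) (h : Nat.Coprime m n) (hd : 0 < d) :
    m / d + n / d ≤ (m + n - 1) / d + (if d = 1 then 1 else 0) := by
  by_cases hd1 : d = 1
  · subst hd1; simp; omega
  · simp only [hd1, if_false, add_zero]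
    rw [Nat.le_div_iff_mul_le hd, add_mul]
    have h1 : m / d * d + m % d = m := Nat.div_add_mod' m d
    have h2 : n / d * d + n % d = n := Nat.div_add_mod' n d
    have h3 : ¬(m % d = 0 ∧ n % d = 0) := by
      rintro ⟨e1, e2⟩
      have d1 : d ∣ Nat.gcd m n :=
        Nat.dvd_gcd (Nat.dvd_of_mod_eq_zero e1) (Nat.dvd_of_mod_eq_zero e2)
      rw [h] at d1
      exact hd1 (Nat.dvd_one.mp d1)
    have hmd : m % d < d := Nat.mod_lt _ hd
    have hnd : n % d < d := Nat.mod_lt _ hd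
    generalize m / d * d = u at h1 ⊢
    generalize n / d * d = v at h2 ⊢
    generalize m % d = r at h1 h3 hmd
    generalize n % d = s at h2 h3 hnd
    omega

lemma prodX_eq_cyc (N K : ℕ) (h : N ≤ K) :
    ∏ j ∈ Ioc 0 N, (X ^ j - 1 : ℚ[X]) =
      ∏ d ∈ Ioc 0 K, (cyclotomic d ℚ) ^ (N / d) := by
  have h1 : ∀ j ∈ Ioc 0 N, (X ^ j - 1 : ℚ[X]) =
      ∏ d ∈ Ioc 0 K, (if d ∣ j then cyclotomic d ℚ else 1) := by
    intro j hj
    rw [mem_Ioc] at hj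
    have hdiv : j.divisors = (Ioc 0 K).filter (· ∣ j) := by
      ext d
      simp only [Nat.mem_divisors, mem_filter, mem_Ioc]
      constructor
      · rintro ⟨hd, -⟩
        exact ⟨⟨Nat.pos_of_dvd_of_pos hd hj.1, le_trans (Nat.le_of_dvd hj.1 hd) (hj.2.trans h)⟩, hd⟩
      · rintro ⟨-, hd⟩
        exact ⟨hd, by omega⟩
    rw [← prod_cyclotomic_eq_X_pow_sub_one hj.1, hdiv, Finset.prod_filter]
  rw [Finset.prod_congr rfl h1, Finset.prod_comm]
  refine Finset.prod_congr rfl fun d hd => ?_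
  have : (Ioc 0 N).filter (fun j => d ∣ j) = {x ∈ Ioc 0 N | d ∣ x} := rfl
  rw [Finset.prod_ite, Finset.prod_const, Finset.prod_const_one, mul_one, this,
    Nat.Ioc_filter_dvd_card_eq_div]

lemma prod_one_sub_eq (N K : ℕ) (h : N ≤ K) :
    ∏ j ∈ Ioc 0 N, (1 - X ^ j : ℚ[X]) =
      (-1 : ℚ[X]) ^ N * ∏ d ∈ Ioc 0 K, (cyclotomic d ℚ) ^ (N / d) := by
  rw [← prodX_eq_cyc N K h]
  have h2 : ∀ j ∈ Ioc 0 N, (1 - X ^ j : ℚ[X]) = (-1) * (X ^ j - 1) := fun j _ => by ring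
  rw [Finset.prod_congr rfl h2, Finset.prod_mul_distrib, Finset.prod_const,
    Nat.card_Ioc, Nat.sub_zero]

lemma prod_ite_cyc (K : ℕ) (hK : 0 < K) :
    ∏ d ∈ Ioc 0 K, (cyclotomic d ℚ) ^ (if d = 1 then 1 else 0) = X - 1 := by
  have h1 : ∀ d ∈ Ioc 0 K, (cyclotomic d ℚ) ^ (if d = 1 then 1 else 0)
      = if d = 1 then cyclotomic d ℚ else 1 := by
    intro d _; split_ifs <;> simp
  rw [Finset.prod_congr rfl h1, Finset.prod_ite_eq' (Ioc 0 K) 1 (fun d => cyclotomic d ℚ),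
    if_pos (mem_Ioc.mpr ⟨zero_lt_one, hK⟩), cyclotomic_one]

lemma fac_ne (j : ℕ) (hj : 0 < j) : (1 - X ^ j : ℚ[X]) ≠ 0 := by
  have h1 : (1 - X ^ j : ℚ[X]) = -(X ^ j - C 1) := by simp
  rw [h1, neg_ne_zero]
  exact (monic_X_pow_sub_C (1 : ℚ) hj.ne').ne_zero

lemma fac_deg (j : ℕ) : (1 - X ^ j : ℚ[X]).natDegree = j := by
  have h1 : (1 - X ^ j : ℚ[X]) = -(X ^ j - C 1) := by simp
  rw [h1, natDegree_neg, natDegree_X_pow_sub_C]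

lemma gauss_sum (N : ℕ) : (∑ j ∈ Ioc 0 N, j) * 2 = N * (N + 1) := by
  induction N with
  | zero => simp
  | succ K ih =>
    rw [Finset.sum_Ioc_succ_top (Nat.zero_le _), add_mul, ih]; ring

lemma rev_fac (j : ℕ) (hj : 0 < j) : (1 - X ^ j : ℚ[X]).reverse = -(1 - X ^ j) := by
  have hd : (1 - X ^ j : ℚ[X]).natDegree = j := fac_deg j
  rw [reverse, hd]
  have h0 : (1 : ℚ[X]) = X ^ 0 := (pow_zero X).symm
  calc reflect j (1 - X ^ j : ℚ[X]) = reflect j ((X:ℚ[X]) ^ 0) - reflect j ((X:ℚ[X]) ^ j) := by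
        rw [reflect_sub, ← h0]
    _ = X ^ (revAt j 0) - X ^ (revAt j j) := by rw [reflect_monomial, reflect_monomial]
    _ = -(1 - X ^ j) := by
        rw [revAt_le (Nat.zero_le j), revAt_le (le_refl j), Nat.sub_zero, Nat.sub_self,
          pow_zero]; ring

lemma rev_prod (N : ℕ) :
    (∏ j ∈ Ioc 0 N, (1 - X ^ j : ℚ[X])).reverse = (-1) ^ N * ∏ j ∈ Ioc 0 N, (1 - X ^ j) := by
  induction N with
  | zero =>
    simp only [Ioc_self, Finset.prod_empty]
    have : (1 : ℚ[X]) = C 1 := by simp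
    rw [this, reverse_C]
    simp
  | succ K ih =>
    rw [Finset.prod_Ioc_succ_top (Nat.zero_le _),
      reverse_mul_of_domain, ih, rev_fac (K + 1) K.succ_pos]
    ring

theorem stmt_19 (m n : ℕ) (hm : 0 < m) (hn : 0 < n) (h : Nat.Coprime m n) :
    ∃ P : Polynomial ℚ,
      algebraMap (Polynomial ℚ) (RatFunc ℚ) P = qCat q m n ∧
      P.natDegree = (m - 1) * (n - 1) ∧
      ∀ i ≤ (m - 1) * (n - 1), P.coeff i = P.coeff ((m - 1) * (n - 1) - i) := by
  obtain ⟨a, rfl⟩ : ∃ a, m = a + 1 := ⟨m - 1, by omega⟩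
  obtain ⟨b, rfl⟩ : ∃ b, n = b + 1 := ⟨n - 1, by omega⟩
  set m := a + 1 with hmdef
  set n := b + 1 with hndef
  set K := m + n - 1 with hKdef
  have hK1 : m + n = K + 1 := by omega
  have hK0 : 0 < K := by omega
  have hmK : m ≤ K := by omega
  have hnK : n ≤ K := by omega
  set A : ℚ[X] := (1 - X) * ∏ j ∈ Ioc 0 K, (1 - X ^ j) with hAdef
  set B : ℚ[X] := (∏ j ∈ Ioc 0 m, (1 - X ^ j)) * ∏ j ∈ Ioc 0 n, (1 - X ^ j) with hBdef
  -- cyclotomic forms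
  have hOne : (1 - X : ℚ[X]) = 1 - X ^ 1 := by rw [pow_one]
  have hAcyc : A = (-1 : ℚ[X]) ^ (m + n) *
      ∏ d ∈ Ioc 0 K, (cyclotomic d ℚ) ^ (K / d + if d = 1 then 1 else 0) := by
    have : ∀ d ∈ Ioc 0 K, (cyclotomic d ℚ) ^ (K / d + if d = 1 then 1 else 0)
        = (cyclotomic d ℚ) ^ (K / d) * (cyclotomic d ℚ) ^ (if d = 1 then 1 else 0) :=
      fun d _ => pow_add _ _ _
    have h2 : ∀ j ∈ Ioc 0 K, (1 - X ^ j : ℚ[X]) = (-1) * (X ^ j - 1) := fun j _ => by ring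
    rw [Finset.prod_congr rfl this, Finset.prod_mul_distrib, prod_ite_cyc K hK0,
      ← prodX_eq_cyc K K le_rfl, hAdef, Finset.prod_congr rfl h2, Finset.prod_mul_distrib,
      Finset.prod_const, Nat.card_Ioc, Nat.sub_zero, hK1]
    ring
  have hBcyc : B = (-1 : ℚ[X]) ^ (m + n) *
      ∏ d ∈ Ioc 0 K, (cyclotomic d ℚ) ^ (m / d + n / d) := by
    have : ∀ d ∈ Ioc 0 K, (cyclotomic d ℚ) ^ (m / d + n / d)
        = (cyclotomic d ℚ) ^ (m / d) * (cyclotomic d ℚ) ^ (n / d) :=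
      fun d _ => pow_add _ _ _
    rw [Finset.prod_congr rfl this, Finset.prod_mul_distrib, hBdef,
      prod_one_sub_eq m K hmK, prod_one_sub_eq n K hnK]
    ring
  -- divisibility
  have hdvd : B ∣ A := by
    rw [hAcyc, hBcyc]
    refine mul_dvd_mul_left _ (Finset.prod_dvd_prod_of_dvd _ _ fun d hd => ?_)
    rw [mem_Ioc] at hd
    exact pow_dvd_pow _ (expo_le m n d h hd.1)
  obtain ⟨P, hP⟩ := hdvd
  -- nonvanishing
  have hprodne : ∀ N : ℕ, (∏ j ∈ Ioc 0 N, (1 - X ^ j : ℚ[X])) ≠ 0 := by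
    intro N
    rw [Finset.prod_ne_zero_iff]
    intro j hj
    exact fac_ne j (mem_Ioc.mp hj).1
  have hBne : B ≠ 0 := mul_ne_zero (hprodne m) (hprodne n)
  have hAne : A ≠ 0 := mul_ne_zero (hOne ▸ fac_ne 1 one_pos) (hprodne K)
  have hPne : P ≠ 0 := by rintro rfl; rw [mul_zero] at hP; exact hAne hP
  -- degrees
  have hproddeg : ∀ N : ℕ, (∏ j ∈ Ioc 0 N, (1 - X ^ j : ℚ[X])).natDegree = ∑ j ∈ Ioc 0 N, j := by
    intro N
    rw [natDegree_prod _ _ fun j hj => fac_ne j (mem_Ioc.mp hj).1]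
    exact Finset.sum_congr rfl fun j _ => fac_deg j
  have hAdeg : A.natDegree = 1 + ∑ j ∈ Ioc 0 K, j := by
    rw [hAdef, natDegree_mul (hOne ▸ fac_ne 1 one_pos) (hprodne K), hproddeg, hOne, fac_deg]
  have hBdeg : B.natDegree = (∑ j ∈ Ioc 0 m, j) + ∑ j ∈ Ioc 0 n, j := by
    rw [hBdef, natDegree_mul (hprodne m) (hprodne n), hproddeg, hproddeg]
  have hsplit : A.natDegree = B.natDegree + P.natDegree := by
    rw [hP, natDegree_mul hBne hPne]
  have hPdeg : P.natDegree = a * b := by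
    have e1 := gauss_sum K
    have e2 := gauss_sum m
    have e3 := gauss_sum n
    rw [hAdeg, hBdeg] at hsplit
    have hKab : K = a + b + 1 := by omega
    have cast1 : ((∑ j ∈ Ioc 0 K, j : ℕ) : ℤ) * 2 = (a + b + 1) * (a + b + 2) := by
      have := congrArg (Nat.cast : ℕ → ℤ) e1
      push_cast [hKab] at this ⊢
      linarith [this]
    have cast2 : ((∑ j ∈ Ioc 0 m, j : ℕ) : ℤ) * 2 = (a + 1) * (a + 2) := by
      have := congrArg (Nat.cast : ℕ → ℤ) e2
      push_cast [hmdef] at this ⊢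
      linarith [this]
    have cast3 : ((∑ j ∈ Ioc 0 n, j : ℕ) : ℤ) * 2 = (b + 1) * (b + 2) := by
      have := congrArg (Nat.cast : ℕ → ℤ) e3
      push_cast [hndef] at this ⊢
      linarith [this]
    have cast4 : (1 : ℤ) + (∑ j ∈ Ioc 0 K, j : ℕ)
        = ((∑ j ∈ Ioc 0 m, j : ℕ) + (∑ j ∈ Ioc 0 n, j : ℕ)) + (P.natDegree : ℤ) := by
      exact_mod_cast congrArg (Nat.cast : ℕ → ℤ) hsplit
    have h2P : 2 * (P.natDegree : ℤ) = 2 * ((a : ℤ) * b) := by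
      linear_combination (-2 : ℤ) * cast4 + cast1 - cast2 - cast3
    have : (P.natDegree : ℤ) = (a : ℤ) * b := by linarith
    exact_mod_cast this
  -- palindromicity
  have hrev : P.reverse = P := by
    have hArev : A.reverse = (-1) ^ (m + n) * A := by
      rw [hAdef, reverse_mul_of_domain, rev_prod, hOne, rev_fac 1 one_pos, hK1]
      ring
    have hBrev : B.reverse = (-1) ^ (m + n) * B := by
      rw [hBdef, reverse_mul_of_domain, rev_prod, rev_prod]
      ring
    have h1 : A.reverse = B.reverse * P.reverse := by rw [hP, reverse_mul_of_domain]
    rw [hArev, hBrev] at h1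
    have hu : ((-1 : ℚ[X])) ^ (m + n) ≠ 0 := pow_ne_zero _ (neg_ne_zero.mpr one_ne_zero)
    have h2 : B * P = B * P.reverse := by
      apply mul_left_cancel₀ hu
      linear_combination h1 - ((-1 : ℚ[X]) ^ (m + n)) * hP
    exact (mul_left_cancel₀ hBne h2).symm
  -- RatFunc identity
  have hq1 : (1 : RatFunc ℚ) - q ≠ 0 := by
    have h1 : (1 : RatFunc ℚ) - q = algebraMap ℚ[X] (RatFunc ℚ) (1 - X) := by
      simp [q, map_sub, RatFunc.algebraMap_X]
    rw [h1]
    exact RatFunc.algebraMap_ne_zero (hOne ▸ fac_ne 1 one_pos)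
  have hqj : ∀ j : ℕ, 0 < j → (1 : RatFunc ℚ) - q ^ j ≠ 0 := by
    intro j hj
    have h1 : (1 : RatFunc ℚ) - q ^ j = algebraMap ℚ[X] (RatFunc ℚ) (1 - X ^ j) := by
      simp [q, map_sub, map_pow, RatFunc.algebraMap_X]
    rw [h1]
    exact RatFunc.algebraMap_ne_zero (fac_ne j hj)
  have hqprod : ∀ N : ℕ, (∏ j ∈ Ioc 0 N, ((1 : RatFunc ℚ) - q ^ j)) ≠ 0 := by
    intro N
    rw [Finset.prod_ne_zero_iff]
    exact fun j hj => hqj j (mem_Ioc.mp hj).1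
  have hfact : ∀ k : ℕ, qfact q k * (1 - q) ^ k = ∏ j ∈ Ioc 0 k, (1 - q ^ j) := by
    intro k
    induction k with
    | zero => simp [qfact]
    | succ l ih =>
      rw [Finset.prod_Ioc_succ_top (Nat.zero_le _), ← ih]
      show qint q (l + 1) * qfact q l * (1 - q) ^ (l + 1) = _
      rw [qint, pow_succ]
      field_simp
      ring
  have ek : ∀ k : ℕ, qfact q k = (∏ j ∈ Ioc 0 k, (1 - q ^ j)) / (1 - q) ^ k := by
    intro k
    rw [eq_div_iff (pow_ne_zero _ hq1), hfact]
  have hA2 : algebraMap ℚ[X] (RatFunc ℚ) A = (1 - q) * ∏ j ∈ Ioc 0 K, (1 - q ^ j) := by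
    rw [hAdef, map_mul, map_sub, map_one, map_prod]
    simp [map_sub, map_pow, map_one, RatFunc.algebraMap_X, q]
  have hB2 : algebraMap ℚ[X] (RatFunc ℚ) B =
      (∏ j ∈ Ioc 0 m, (1 - q ^ j)) * ∏ j ∈ Ioc 0 n, (1 - q ^ j) := by
    rw [hBdef, map_mul, map_prod, map_prod]
    simp [map_sub, map_pow, map_one, RatFunc.algebraMap_X, q]
  have hfull : (∏ j ∈ Ioc 0 (m + n), ((1:RatFunc ℚ) - q ^ j))
      = (∏ j ∈ Ioc 0 K, (1 - q ^ j)) * (1 - q ^ (m + n)) := by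
    rw [hK1, Finset.prod_Ioc_succ_top (Nat.zero_le _)]
  have key : qCat q m n * algebraMap ℚ[X] (RatFunc ℚ) B = algebraMap ℚ[X] (RatFunc ℚ) A := by
    rw [hA2, hB2]
    show (qint q (m + n))⁻¹ * qbinom q (m + n) n * _ = _
    rw [qbinom, Nat.add_sub_cancel, qint, ek (m + n), ek n, ek m, hfull]
    have hmn : ((1:RatFunc ℚ) - q ^ (m + n)) ≠ 0 := hqj (m + n) (by omega)
    have hpm := hqprod m
    have hpn := hqprod n
    have hpK := hqprod K
    have hpow : ((1 : RatFunc ℚ) - q) ^ (m + n) = (1 - q) ^ m * (1 - q) ^ n := pow_add _ m n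
    field_simp [hq1, hmn, hpm, hpn, hpK, hpow]
    ring
  have hPq : algebraMap ℚ[X] (RatFunc ℚ) P = qCat q m n := by
    have hABP : algebraMap ℚ[X] (RatFunc ℚ) A
        = algebraMap ℚ[X] (RatFunc ℚ) B * algebraMap ℚ[X] (RatFunc ℚ) P := by
      rw [hP, map_mul]
    have hBq : algebraMap ℚ[X] (RatFunc ℚ) B ≠ 0 := RatFunc.algebraMap_ne_zero hBne
    have := key
    rw [hABP] at this
    have h2 : qCat q m n * algebraMap ℚ[X] (RatFunc ℚ) B
        = algebraMap ℚ[X] (RatFunc ℚ) P * algebraMap ℚ[X] (RatFunc ℚ) B := by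
      rw [this]; ring
    exact (mul_right_cancel₀ hBq h2).symm
  refine ⟨P, hPq, ?_, ?_⟩
  · rw [hmdef, hndef]; simpa using hPdeg
  · intro i hi
    rw [hmdef, hndef] at hi ⊢
    simp only [Nat.add_sub_cancel] at hi ⊢
    have hi' : i ≤ P.natDegree := by rw [hPdeg]; exact hi
    have : P.coeff (P.natDegree - i) = P.coeff i := by
      conv_rhs => rw [← hrev]
      rw [coeff_reverse, revAt_le hi']
    rw [hPdeg] at this
    rw [← this]
end
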